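/- arXiv:2509.14843 — 8 statements merged into one kernel-verified Lean document; each statement's English description precedes it below -/
import Mathlib

section
/- For all real numbers λ and μ, the limit as p → ∞ of (λ^(2p+1) + μ^(2p+1))^(1/(2p+1)) (where the (2p+1)-th root is the real odd root) equals λ if |λ| > |μ|, equals (λ+μ)/2 if |λ| = |μ|, and equals μ if |λ| < |μ|. -/
open Finset Filter

/-- The binary idempotent symmetric operation `⊞`. -/
noncomputable def boxplus (a b : ℝ) : ℝ :=
  if |b| < |a| then a else if |a| = |b| then (a + b) / 2 else b

/-- The lower operation `⌣⁻`. -/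
noncomputable def smileMinus (a b : ℝ) : ℝ :=
  if |b| < |a| then a else if |a| = |b| then min a b else b

/-- Real odd `(2p+1)`-th root. -/
noncomputable def oddRoot (p : ℕ) (x : ℝ) : ℝ :=
  if 0 ≤ x then x ^ ((1 : ℝ) / (2 * p + 1)) else -((-x) ^ ((1 : ℝ) / (2 * p + 1)))

/-- The `n`-ary boxplus over a finite index set. -/
noncomputable def naryBox {ι : Type*} (s : Finset ι) (f : ι → ℝ) : ℝ :=
  let R := s.filter fun i =>
    (s.filter fun j => f j = f i).card ≠ (s.filter fun j => f j = -f i).card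
  if hR : R.Nonempty then
    let M := R.sup' hR fun i => |f i|
    if (R.filter fun i => f i = M).card > (R.filter fun i => f i = -M).card then
      R.sup' hR f
    else
      R.inf' hR f
  else 0

/-- Componentwise `n`-ary boxplus for vectors. -/
noncomputable def vecBox {ι : Type*} {n : ℕ} (s : Finset ι) (f : ι → Fin n → ℝ) :
    Fin n → ℝ :=
  fun k => naryBox s (fun i => f i k)

lemma oddRoot_pow_mul (p : ℕ) (l c : ℝ) (hc : 0 < c) :
    oddRoot p (l ^ (2 * p + 1) * c) = l * c ^ ((1 : ℝ) / (2 * p + 1)) := by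
  have hrt : ∀ x : ℝ, 0 ≤ x → (x ^ (2 * p + 1)) ^ ((1:ℝ)/(2 * p + 1)) = x := by
    intro x hx
    rw [← Real.rpow_natCast x (2 * p + 1), ← Real.rpow_mul hx]
    push_cast
    rw [mul_one_div, div_self (by positivity), Real.rpow_one]
  rcases le_or_gt 0 l with hl | hl
  · have h1 : 0 ≤ l ^ (2 * p + 1) * c := by positivity
    rw [oddRoot, if_pos h1, Real.mul_rpow (by positivity) hc.le, hrt l hl]
  · have hlp : l ^ (2 * p + 1) < 0 := Odd.pow_neg ⟨p, by ring⟩ hl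
    have h1 : ¬ (0 ≤ l ^ (2 * p + 1) * c) := by nlinarith
    rw [oddRoot, if_neg h1]
    have h2 : -(l ^ (2 * p + 1) * c) = (-l) ^ (2 * p + 1) * c := by
      rw [Odd.neg_pow ⟨p, by ring⟩]; ring
    rw [h2, Real.mul_rpow (pow_nonneg (by linarith) _) hc.le, hrt (-l) (by linarith)]
    ring

lemma aux_tendsto (l m : ℝ) (h : |m| ≤ |l|) (hne : m ≠ -l) :
    Tendsto (fun p : ℕ => oddRoot p (l ^ (2 * p + 1) + m ^ (2 * p + 1)))
      atTop (nhds l) := by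
  have hl : l ≠ 0 := by
    rintro rfl
    simp only [abs_zero, abs_nonpos_iff] at h
    exact hne (by simp [h])
  set r := m / l with hr
  have hrabs : |r| ≤ 1 := by
    rw [hr, abs_div]
    exact div_le_one_of_le₀ h (abs_nonneg l)
  have hrne : r ≠ -1 := by
    intro h1
    apply hne
    rw [hr, div_eq_iff hl] at h1
    linarith
  have key : ∃ L : ℝ, 0 < L ∧ Tendsto (fun p : ℕ => 1 + r ^ (2 * p + 1)) atTop (nhds L) := by
    rcases eq_or_ne r 1 with hr1 | hr1
    · refine ⟨2, by norm_num, ?_⟩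
      have : (fun p : ℕ => 1 + r ^ (2 * p + 1)) = fun _ => 2 := by
        funext p; rw [hr1, one_pow]; norm_num
      rw [this]; exact tendsto_const_nhds
    · have hlt : |r| < 1 := by
        rcases lt_or_eq_of_le hrabs with h' | h'
        · exact h'
        · rcases abs_eq (by norm_num : (0:ℝ) ≤ 1) |>.mp h' with h'' | h''
          · exact absurd h'' hr1
          · exact absurd h'' hrne
      refine ⟨1, by norm_num, ?_⟩
      have h0 : Tendsto (fun p : ℕ => r ^ (2 * p + 1)) atTop (nhds 0) := by
        have := tendsto_pow_atTop_nhds_zero_of_abs_lt_one hlt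
        exact this.comp (Filter.tendsto_atTop_atTop.mpr fun b => ⟨b, fun a ha => by omega⟩)
      simpa using tendsto_const_nhds.add h0
  obtain ⟨L, hLpos, hL⟩ := key
  have hexp : Tendsto (fun p : ℕ => (1:ℝ) / (2 * p + 1)) atTop (nhds 0) := by
    have h1 : Tendsto (fun p : ℕ => 2 * (p:ℝ) + 1) atTop atTop := by
      apply Filter.tendsto_atTop_add_const_right
      exact (tendsto_natCast_atTop_atTop).const_mul_atTop (by norm_num)
    simpa [one_div, Pi.inv_def] using h1.inv_tendsto_atTop
  have hrpow : Tendsto (fun p : ℕ => (1 + r ^ (2 * p + 1)) ^ ((1:ℝ)/(2 * p + 1)))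
      atTop (nhds 1) := by
    have := hL.rpow hexp (Or.inl hLpos.ne')
    simpa using this
  have hpos : ∀ᶠ p : ℕ in atTop, 0 < 1 + r ^ (2 * p + 1) :=
    hL.eventually (eventually_gt_nhds hLpos)
  have heq : (fun p : ℕ => l * (1 + r ^ (2 * p + 1)) ^ ((1:ℝ)/(2 * p + 1))) =ᶠ[atTop]
      (fun p : ℕ => oddRoot p (l ^ (2 * p + 1) + m ^ (2 * p + 1))) := by
    filter_upwards [hpos] with p hp
    have hsum : l ^ (2 * p + 1) + m ^ (2 * p + 1)
        = l ^ (2 * p + 1) * (1 + r ^ (2 * p + 1)) := by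
      rw [hr, div_pow]
      field_simp
    rw [hsum, oddRoot_pow_mul p l _ hp]
  have : Tendsto (fun p : ℕ => l * (1 + r ^ (2 * p + 1)) ^ ((1:ℝ)/(2 * p + 1)))
      atTop (nhds l) := by
    simpa using hrpow.const_mul l
  exact this.congr' heq

theorem boxplus_is_limit_of_p_sums (l m : ℝ) :
    Filter.Tendsto (fun p : ℕ => oddRoot p (l ^ (2 * p + 1) + m ^ (2 * p + 1)))
      Filter.atTop (nhds (boxplus l m)) := by
  rcases eq_or_ne m (-l) with rfl | hne
  · have h0 : (fun p : ℕ => oddRoot p (l ^ (2 * p + 1) + (-l) ^ (2 * p + 1))) = fun _ => 0 := by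
      funext p
      rw [Odd.neg_pow ⟨p, by ring⟩]
      simp only [oddRoot, if_pos le_rfl, add_neg_cancel]
      exact Real.zero_rpow (by positivity)
    have hb : boxplus l (-l) = 0 := by
      simp [boxplus, abs_neg]
    rw [h0, hb]
    exact tendsto_const_nhds
  · rcases le_total |m| |l| with h | h
    · have hb : boxplus l m = l := by
        rcases lt_or_eq_of_le h with h' | h'
        · simp [boxplus, h']
        · have : m = l := by
            rcases abs_eq_abs.mp h' with h'' | h''
            · exact h''
            · exact absurd h'' hne
          subst this
          simp [boxplus]
      rw [hb]
      exact aux_tendsto l m h hne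
  
    · have hne' : l ≠ -m := fun h' => hne (by rw [h']; ring)
      have hb : boxplus l m = m := by
        rcases lt_or_eq_of_le h with h' | h'
        · simp [boxplus, h'.not_gt, h'.ne]
        · have : l = m := by
            rcases abs_eq_abs.mp h' with h'' | h''
            · exact h''
            · exact absurd h'' hne'
          subst this
          simp [boxplus]
      rw [hb]
      have := aux_tendsto m l h hne'
      refine this.congr (fun p => ?_)
      rw [add_comm]
end

section
/- For all vectors x ∈ ℝⁿ, the square root of ⟨x, x⟩_∞ equals the Chebyshev (ℓ∞) norm of x, i.e., √(⊞_{i ∈ [n]} x_i²) = max_{i ∈ [n]} |x_i|. -/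
open Finset Filter

theorem sqrt_limit_inner_self_eq_sup_norm (n : ℕ) (x : Fin n → ℝ) :
    Real.sqrt (naryBox Finset.univ (fun i => x i ^ 2)) = ‖x‖ := by
  have hRset : (Finset.univ.filter fun i =>
      (Finset.univ.filter fun j => x j ^ 2 = x i ^ 2).card ≠
      (Finset.univ.filter fun j => x j ^ 2 = -(x i ^ 2)).card)
      = Finset.univ.filter (fun i => x i ≠ 0) := by
    ext i
    simp only [mem_filter, mem_univ, true_and]
    constructor
    · intro h hx
      apply h
      congr 1
      ext j
      simp [hx]
    · intro hx
      have hpos : 0 < x i ^ 2 := by positivity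
      have h2 : (Finset.univ.filter fun j => x j ^ 2 = -(x i ^ 2)) = ∅ := by
        apply Finset.filter_eq_empty_iff.2
        intro j _
        nlinarith [sq_nonneg (x j)]
      rw [h2]
      simp only [Finset.card_empty]
      intro h
      have : i ∈ (Finset.univ.filter fun j => x j ^ 2 = x i ^ 2) := by simp
      have := Finset.card_pos.2 ⟨i, this⟩
      omega
  unfold naryBox
  simp only [hRset]
  by_cases hR : (Finset.univ.filter fun i => x i ≠ 0).Nonempty
  · rw [dif_pos hR]
    set R := Finset.univ.filter (fun i : Fin n => x i ≠ 0) with hRdef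
    have habs : (R.sup' hR fun i => |x i ^ 2|) = R.sup' hR fun i => x i ^ 2 := by
      apply Finset.sup'_congr hR rfl
      intro i _
      exact abs_of_nonneg (sq_nonneg _)
    set M := R.sup' hR fun i => |x i ^ 2| with hM
    have hMeq : M = R.sup' hR fun i => x i ^ 2 := habs
    obtain ⟨i0, hi0, hMi0⟩ := Finset.exists_mem_eq_sup' hR (fun i => x i ^ 2)
    have hi0ne : x i0 ≠ 0 := by simpa [hRdef] using hi0
    have hMpos : 0 < M := by rw [hMeq, hMi0]; positivity
    have hneg : (R.filter fun i => x i ^ 2 = -M) = ∅ := by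
      apply Finset.filter_eq_empty_iff.2
      intro j _
      nlinarith [sq_nonneg (x j)]
    have hposmem : i0 ∈ R.filter fun i => x i ^ 2 = M := by
      simp [hi0, hMeq, hMi0]
    have hcard : (R.filter fun i => x i ^ 2 = M).card >
        (R.filter fun i => x i ^ 2 = -M).card := by
      rw [hneg]
      simpa using Finset.card_pos.2 ⟨i0, hposmem⟩
    rw [if_pos hcard]
    rw [← hMeq]
    apply le_antisymm
    · rw [hMeq, hMi0]
      rw [Real.sqrt_sq_eq_abs]
      exact norm_le_pi_norm x i0
    · apply (pi_norm_le_iff_of_nonneg (Real.sqrt_nonneg _)).2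
      intro i
      rw [Real.norm_eq_abs, ← Real.sqrt_sq_eq_abs]
      apply Real.sqrt_le_sqrt
      by_cases hxi : x i = 0
      · nlinarith [hMpos]
      · rw [hMeq]
        exact Finset.le_sup' (fun i => x i ^ 2) (Finset.mem_filter.2 ⟨Finset.mem_univ i, hxi⟩)
  · rw [dif_neg hR]
    have hx : x = 0 := by
      funext i
      show x i = 0
      by_contra h
      exact hR ⟨i, by simp [h]⟩
    simp [hx]
end

section
/- The limit inner product is homogeneous: for all α ∈ ℝ and all x, y ∈ ℝⁿ, α·⟨x, y⟩_∞ = ⟨α·x, y⟩_∞ = ⟨x, α·y⟩_∞. -/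
open Finset Filter

/-- The set of "remaining" indices. -/
noncomputable def Rset {ι : Type*} (s : Finset ι) (f : ι → ℝ) : Finset ι :=
  s.filter fun i =>
    (s.filter fun j => f j = f i).card ≠ (s.filter fun j => f j = -f i).card

lemma naryBox_eq {ι : Type*} (s : Finset ι) (f : ι → ℝ) :
    naryBox s f =
      if hR : (Rset s f).Nonempty then
        if ((Rset s f).filter fun i => f i = (Rset s f).sup' hR fun i => |f i|).card >
            ((Rset s f).filter fun i => f i = -((Rset s f).sup' hR fun i => |f i|)).card then
          (Rset s f).sup' hR f
        else
          (Rset s f).inf' hR f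
      else 0 := rfl

lemma sup'_neg' {ι : Type*} (s : Finset ι) (h : s.Nonempty) (f : ι → ℝ) :
    s.sup' h (fun i => -f i) = -s.inf' h f := by
  apply le_antisymm
  · apply Finset.sup'_le
    intro i hi
    exact neg_le_neg (Finset.inf'_le f hi)
  · obtain ⟨b, hb, hbe⟩ := Finset.exists_mem_eq_inf' h f
    rw [hbe]
    exact Finset.le_sup' (fun i => -f i) hb

lemma inf'_neg' {ι : Type*} (s : Finset ι) (h : s.Nonempty) (f : ι → ℝ) :
    s.inf' h (fun i => -f i) = -s.sup' h f := by
  apply le_antisymm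
  · obtain ⟨b, hb, hbe⟩ := Finset.exists_mem_eq_sup' h f
    rw [hbe]
    exact Finset.inf'_le (fun i => -f i) hb
  · apply Finset.le_inf'
    intro i hi
    exact neg_le_neg (Finset.le_sup' f hi)

lemma sup'_mul_nonneg {ι : Type*} (s : Finset ι) (h : s.Nonempty) (f : ι → ℝ)
    {c : ℝ} (hc : 0 ≤ c) : s.sup' h (fun i => c * f i) = c * s.sup' h f :=
  (Finset.comp_sup'_eq_sup'_comp h (fun x => c * x) (fun x y => mul_max_of_nonneg x y hc)).symm

lemma inf'_mul_nonneg {ι : Type*} (s : Finset ι) (h : s.Nonempty) (f : ι → ℝ)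
    {c : ℝ} (hc : 0 ≤ c) : s.inf' h (fun i => c * f i) = c * s.inf' h f :=
  (Finset.apply_inf'_eq_inf'_comp h (fun x => c * x) (fun x y => mul_min_of_nonneg x y hc)).symm

/-- Key counting lemma: the counts of `M` and `-M` in `Rset` differ. -/
lemma key_card_ne {ι : Type*} (s : Finset ι) (f : ι → ℝ) (hR : (Rset s f).Nonempty) :
    ((Rset s f).filter fun i => f i = (Rset s f).sup' hR fun i => |f i|).card ≠
      ((Rset s f).filter fun i => f i = -((Rset s f).sup' hR fun i => |f i|)).card := by
  set M := (Rset s f).sup' hR fun i => |f i| with hMdef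
  obtain ⟨i, hiR, hiM⟩ := Finset.exists_mem_eq_sup' hR fun i => |f i|
  simp only [Rset, Finset.mem_filter] at hiR
  have habs : f i = M ∨ f i = -M := by
    rcases abs_cases (f i) with ⟨h, _⟩ | ⟨h, _⟩
    · left; rw [← hMdef] at hiM; rw [hiM, h]
    · right; rw [← hMdef] at hiM; rw [hiM, h, neg_neg]
  have hcs : (s.filter fun j => f j = M).card ≠ (s.filter fun j => f j = -M).card := by
    rcases habs with h | h
    · rw [← h]; exact hiR.2
    · have h2 := hiR.2
      rw [h] at h2
      simp only [neg_neg] at h2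
      exact h2.symm
  have hsub : ∀ c : ℝ,
      (s.filter fun j => f j = c).card ≠ (s.filter fun j => f j = -c).card →
      (Rset s f).filter (fun i => f i = c) = s.filter fun i => f i = c := by
    intro c hc
    ext j
    simp only [Rset, Finset.mem_filter]
    constructor
    · rintro ⟨⟨hj, _⟩, h2⟩; exact ⟨hj, h2⟩
    · rintro ⟨hj, h2⟩
      refine ⟨⟨hj, ?_⟩, h2⟩
      rw [h2]; exact hc
  rw [hsub M hcs, hsub (-M) (by rw [neg_neg]; exact hcs.symm)]
  exact hcs

lemma naryBox_neg {ι : Type*} (s : Finset ι) (f : ι → ℝ) :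
    naryBox s (fun i => -f i) = -naryBox s f := by
  have hRset : Rset s (fun i => -f i) = Rset s f := by
    unfold Rset
    apply Finset.filter_congr
    intro i _
    have h1 : (s.filter fun j => -f j = -f i) = s.filter fun j => f j = f i :=
      Finset.filter_congr fun j _ => by simp [neg_inj]
    have h2 : (s.filter fun j => -f j = -(-f i)) = s.filter fun j => f j = -f i :=
      Finset.filter_congr fun j _ => by rw [neg_neg, neg_eq_iff_eq_neg]
    rw [h1, h2]
  rw [naryBox_eq s (fun i => -f i), naryBox_eq s f, hRset]
  by_cases hR : (Rset s f).Nonempty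
  · rw [dif_pos hR, dif_pos hR]
    have hM' : ((Rset s f).sup' hR fun i => |-f i|) = (Rset s f).sup' hR fun i => |f i| :=
      Finset.sup'_congr hR rfl fun i _ => abs_neg (f i)
    rw [hM']
    set M := (Rset s f).sup' hR fun i => |f i| with hMdef
    have e1 : ((Rset s f).filter fun i => -f i = M) = (Rset s f).filter fun i => f i = -M :=
      Finset.filter_congr fun i _ => by rw [neg_eq_iff_eq_neg]
    have e2 : ((Rset s f).filter fun i => -f i = -M) = (Rset s f).filter fun i => f i = M :=
      Finset.filter_congr fun i _ => by simp [neg_inj]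
    rw [e1, e2, sup'_neg' _ hR f, inf'_neg' _ hR f]
    have hkey := key_card_ne s f hR
    rw [← hMdef] at hkey
    by_cases hc : ((Rset s f).filter fun i => f i = M).card >
        ((Rset s f).filter fun i => f i = -M).card
    · rw [if_pos hc, if_neg (lt_asymm hc)]
    · rw [if_neg hc, if_pos ((not_lt.mp hc).lt_of_ne hkey)]
  · rw [dif_neg hR, dif_neg hR, neg_zero]

lemma naryBox_pos_mul {ι : Type*} (s : Finset ι) (f : ι → ℝ) {α : ℝ} (hα : 0 < α) :
    naryBox s (fun i => α * f i) = α * naryBox s f := by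
  have hα' : α ≠ 0 := hα.ne'
  have hRset : Rset s (fun i => α * f i) = Rset s f := by
    unfold Rset
    apply Finset.filter_congr
    intro i _
    have h1 : (s.filter fun j => α * f j = α * f i) = s.filter fun j => f j = f i :=
      Finset.filter_congr fun j _ => by rw [mul_right_inj' hα']
    have h2 : (s.filter fun j => α * f j = -(α * f i)) = s.filter fun j => f j = -f i :=
      Finset.filter_congr fun j _ => by rw [← mul_neg, mul_right_inj' hα']
    rw [h1, h2]
  rw [naryBox_eq s (fun i => α * f i), naryBox_eq s f, hRset]
  by_cases hR : (Rset s f).Nonempty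
  · rw [dif_pos hR, dif_pos hR]
    have hM' : ((Rset s f).sup' hR fun i => |α * f i|) =
        α * (Rset s f).sup' hR fun i => |f i| := by
      rw [← sup'_mul_nonneg _ hR _ hα.le]
      exact Finset.sup'_congr hR rfl fun i _ => by rw [abs_mul, abs_of_pos hα]
    rw [hM']
    set M := (Rset s f).sup' hR fun i => |f i| with hMdef
    have e1 : ((Rset s f).filter fun i => α * f i = α * M) =
        (Rset s f).filter fun i => f i = M :=
      Finset.filter_congr fun i _ => by rw [mul_right_inj' hα']
    have e2 : ((Rset s f).filter fun i => α * f i = -(α * M)) =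
        (Rset s f).filter fun i => f i = -M :=
      Finset.filter_congr fun i _ => by rw [← mul_neg, mul_right_inj' hα']
    rw [e1, e2, sup'_mul_nonneg _ hR f hα.le, inf'_mul_nonneg _ hR f hα.le]
    split_ifs <;> rfl
  · rw [dif_neg hR, dif_neg hR, mul_zero]

lemma naryBox_mul {ι : Type*} (s : Finset ι) (f : ι → ℝ) (α : ℝ) :
    naryBox s (fun i => α * f i) = α * naryBox s f := by
  rcases lt_trichotomy α 0 with h | rfl | h
  · have hf : (fun i => α * f i) = fun i => -((-α) * f i) := by funext i; ring
    rw [hf, naryBox_neg, naryBox_pos_mul s f (by linarith), neg_mul, neg_neg]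
  · have hR0 : Rset s (fun i => (0 : ℝ) * f i) = ∅ := by
      simp [Rset]
    rw [naryBox_eq, hR0]
    simp
  · exact naryBox_pos_mul s f h

theorem limit_inner_homogeneous (n : ℕ) (α : ℝ) (x y : Fin n → ℝ) :
    α * naryBox Finset.univ (fun i => x i * y i) =
      naryBox Finset.univ (fun i => (α * x i) * y i) ∧
    naryBox Finset.univ (fun i => (α * x i) * y i) =
      naryBox Finset.univ (fun i => x i * (α * y i)) := by
  constructor
  · have h1 : (fun i : Fin n => (α * x i) * y i) = fun i => α * (x i * y i) := by
      funext i; ring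
    rw [h1, naryBox_mul]
  · have h2 : (fun i : Fin n => (α * x i) * y i) = fun i => x i * (α * y i) := by
      funext i; ring
    rw [h2]
end

section
/- Recombination under non-symmetry: let I be a nonempty finite index set, {I_j : j ∈ [m]} a partition of I into nonempty subsets, and (x_i)_{i ∈ I} real numbers. If for all pairs (j,k) ∈ [m]×[m], (⊞_{i ∈ I_j} x_i) + (⊞_{i ∈ I_k} x_i) ≠ 0, then ⊞_{j ∈ [m]} (⊞_{i ∈ I_j} x_i) = ⊞_{i ∈ I} x_i. -/
open Finset Filter

lemma naryBox_eq_of {ι : Type*} (s : Finset ι) (f : ι → ℝ) (b : ℝ)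
    (h1 : (s.filter fun i => f i = -b).card < (s.filter fun i => f i = b).card)
    (h2 : ∀ v : ℝ, |b| < |v| →
      (s.filter fun i => f i = v).card = (s.filter fun i => f i = -v).card) :
    naryBox s f = b := by
  classical
  have hb : b ≠ 0 := by
    rintro rfl; simp at h1
  set R := s.filter fun i =>
    (s.filter fun j => f j = f i).card ≠ (s.filter fun j => f j = -f i).card with hRdef
  have hmemR : ∀ i, i ∈ R ↔ i ∈ s ∧
      (s.filter fun j => f j = f i).card ≠ (s.filter fun j => f j = -f i).card := by
    intro i; simp [hRdef]
  -- there is an attainer of b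
  obtain ⟨i₀, hi₀s, hi₀b⟩ : ∃ i ∈ s, f i = b := by
    have : (s.filter fun i => f i = b).Nonempty := by
      rw [← card_pos]; omega
    obtain ⟨i, hi⟩ := this
    exact ⟨i, (mem_filter.1 hi).1, (mem_filter.1 hi).2⟩
  have hfilterR : ∀ v : ℝ,
      (s.filter fun j => f j = v).card ≠ (s.filter fun j => f j = -v).card →
      R.filter (fun i => f i = v) = s.filter (fun i => f i = v) := by
    intro v hv
    ext i
    simp only [mem_filter, hmemR]
    constructor
    · rintro ⟨⟨hi, -⟩, hfv⟩; exact ⟨hi, hfv⟩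
    · rintro ⟨hi, hfv⟩
      exact ⟨⟨hi, by rw [hfv]; exact hv⟩, hfv⟩
  have hi₀R : i₀ ∈ R := by
    rw [hmemR]; exact ⟨hi₀s, by rw [hi₀b]; exact h1.ne'⟩
  have hR : R.Nonempty := ⟨i₀, hi₀R⟩
  have habs : ∀ i ∈ R, |f i| ≤ |b| := by
    intro i hi
    by_contra hlt
    push_neg at hlt
    exact ((hmemR i).1 hi).2 (h2 _ hlt)
  have hM : (R.sup' hR fun i => |f i|) = |b| := by
    apply le_antisymm (sup'_le _ _ habs)
    have := le_sup' (fun i => |f i|) hi₀R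
    rwa [hi₀b] at this
  have hne' : (s.filter fun j => f j = -b).card ≠ (s.filter fun j => f j = -(-b)).card := by
    rw [neg_neg]; exact h1.ne
  have hfb : R.filter (fun i => f i = b) = s.filter (fun i => f i = b) :=
    hfilterR b h1.ne'
  have hfnb : R.filter (fun i => f i = -b) = s.filter (fun i => f i = -b) :=
    hfilterR (-b) hne'
  rw [naryBox]
  simp only []
  rw [dif_pos hR]
  rcases hb.lt_or_gt with hneg | hpos
  · -- b < 0 : |b| = -b
    have habsb : |b| = -b := abs_of_neg hneg
    have hcond : ¬ ((R.filter fun i => f i = (R.sup' hR fun i => |f i|)).card >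
        (R.filter fun i => f i = -(R.sup' hR fun i => |f i|)).card) := by
      rw [hM, habsb, neg_neg, hfb, hfnb]
      omega
    rw [if_neg hcond]
    apply le_antisymm
    · exact inf'_le _ hi₀R |>.trans_eq hi₀b
    · apply le_inf'
      intro i hi
      have : -|f i| ≤ f i := neg_abs_le _
      have h2' : -|b| ≤ -|f i| := neg_le_neg (habs i hi)
      have : -|b| ≤ f i := h2'.trans this
      rwa [habsb, neg_neg] at this
  · -- b > 0
    have habsb : |b| = b := abs_of_pos hpos
    have hcond : ((R.filter fun i => f i = (R.sup' hR fun i => |f i|)).card >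
        (R.filter fun i => f i = -(R.sup' hR fun i => |f i|)).card) := by
      rw [hM, habsb, hfb, hfnb]
      omega
    rw [if_pos hcond]
    apply le_antisymm
    · apply sup'_le
      intro i hi
      have := (le_abs_self (f i)).trans (habs i hi)
      rwa [habsb] at this
    · exact hi₀b ▸ le_sup' f hi₀R

lemma naryBox_spec {ι : Type*} (s : Finset ι) (f : ι → ℝ) (hb : naryBox s f ≠ 0) :
    (s.filter fun i => f i = -(naryBox s f)).card < (s.filter fun i => f i = naryBox s f).card ∧
    ∀ v : ℝ, |naryBox s f| < |v| →
      (s.filter fun i => f i = v).card = (s.filter fun i => f i = -v).card := by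
  classical
  set R := s.filter fun i =>
    (s.filter fun j => f j = f i).card ≠ (s.filter fun j => f j = -f i).card with hRdef
  have hmemR : ∀ i, i ∈ R ↔ i ∈ s ∧
      (s.filter fun j => f j = f i).card ≠ (s.filter fun j => f j = -f i).card := by
    intro i; simp [hRdef]
  have hR : R.Nonempty := by
    by_contra hc
    rw [naryBox] at hb
    simp only [] at hb
    rw [dif_neg hc] at hb
    exact hb rfl
  set M := R.sup' hR fun i => |f i| with hMdef
  obtain ⟨i₁, hi₁R, hi₁⟩ := exists_mem_eq_sup' hR fun i => |f i|
  have hfi₁ : |f i₁| = M := hi₁.symm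
  have hi₁s : i₁ ∈ s := ((hmemR i₁).1 hi₁R).1
  have hi₁sign : f i₁ = M ∨ f i₁ = -M := by
    rcases abs_choice (f i₁) with hch | hch
    · exact Or.inl (hch.symm.trans hfi₁)
    · refine Or.inr ?_
      have := hch.symm.trans hfi₁
      linarith
  have hMne : (s.filter fun j => f j = M).card ≠ (s.filter fun j => f j = -M).card := by
    have hcond := ((hmemR i₁).1 hi₁R).2
    rcases hi₁sign with h' | h'
    · rwa [h'] at hcond
    · rw [h', neg_neg] at hcond
      exact hcond.symm
  have hMpos : 0 < M := by
    rcases lt_or_ge 0 M with hpos | hle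
    · exact hpos
    · exfalso
      have h1 : |f i₁| = 0 := le_antisymm (hfi₁.le.trans hle) (abs_nonneg _)
      have h0 : f i₁ = 0 := abs_eq_zero.1 h1
      have hcond := ((hmemR i₁).1 hi₁R).2
      rw [h0, neg_zero] at hcond
      exact hcond rfl
  have hfilterR : ∀ v : ℝ,
      (s.filter fun j => f j = v).card ≠ (s.filter fun j => f j = -v).card →
      R.filter (fun i => f i = v) = s.filter (fun i => f i = v) := by
    intro v hv
    ext i
    simp only [mem_filter, hmemR]
    constructor
    · rintro ⟨⟨hi, -⟩, hfv⟩; exact ⟨hi, hfv⟩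
    · rintro ⟨hi, hfv⟩
      exact ⟨⟨hi, by rw [hfv]; exact hv⟩, hfv⟩
  have hMne' : (s.filter fun j => f j = -M).card ≠ (s.filter fun j => f j = -(-M)).card := by
    rw [neg_neg]; exact hMne.symm
  have hfM : R.filter (fun i => f i = M) = s.filter (fun i => f i = M) := hfilterR M hMne
  have hfnM : R.filter (fun i => f i = -M) = s.filter (fun i => f i = -M) := hfilterR (-M) hMne'
  have habsR : ∀ i ∈ R, |f i| ≤ M := fun i hi => le_sup' (fun i => |f i|) hi
  have hcancel : ∀ v : ℝ, M < |v| →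
      (s.filter fun i => f i = v).card = (s.filter fun i => f i = -v).card := by
    intro v hv
    by_contra hc
    have hex : ∃ i ∈ s, f i = v ∨ f i = -v := by
      rcases Nat.lt_or_ge 0 (s.filter fun i => f i = v).card with h0 | h0
      · obtain ⟨i, hi⟩ := card_pos.1 h0
        exact ⟨i, (mem_filter.1 hi).1, Or.inl (mem_filter.1 hi).2⟩
      · have : 0 < (s.filter fun i => f i = -v).card := by omega
        obtain ⟨i, hi⟩ := card_pos.1 this
        exact ⟨i, (mem_filter.1 hi).1, Or.inr (mem_filter.1 hi).2⟩
    obtain ⟨i, his, hiv⟩ := hex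
    have hiR : i ∈ R := by
      rw [hmemR]
      refine ⟨his, ?_⟩
      rcases hiv with h' | h'
      · rw [h']; exact hc
      · rw [h', neg_neg]; exact fun e => hc e.symm
    have h1 : |f i| ≤ M := habsR i hiR
    have h2 : |v| ≤ M := by rcases hiv with h' | h' <;> rw [h'] at h1 <;> simpa using h1
    linarith
  have hval : (naryBox s f = M ∧
        (s.filter fun i => f i = -M).card < (s.filter fun i => f i = M).card) ∨
      (naryBox s f = -M ∧
        (s.filter fun i => f i = M).card < (s.filter fun i => f i = -M).card) := by
    rw [naryBox]
    simp only []
    rw [dif_pos hR]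
    by_cases hcond : (R.filter fun i => f i = M).card > (R.filter fun i => f i = -M).card
    · rw [if_pos hcond]
      left
      rw [hfM, hfnM] at hcond
      refine ⟨?_, hcond⟩
      have hex : ∃ i ∈ R, f i = M := by
        have hne2 : (R.filter fun i => f i = M).Nonempty := by
          rw [hfM]; exact card_pos.1 (by omega)
        obtain ⟨i, hi⟩ := hne2
        exact ⟨i, (mem_filter.1 hi).1, (mem_filter.1 hi).2⟩
      obtain ⟨i, hiR, hiM⟩ := hex
      apply le_antisymm
      · exact sup'_le _ _ fun i hi => (le_abs_self _).trans (habsR i hi)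
      · exact hiM ▸ le_sup' f hiR
    · rw [if_neg hcond]
      right
      push_neg at hcond
      rw [hfM, hfnM] at hcond
      have hlt : (s.filter fun i => f i = M).card < (s.filter fun i => f i = -M).card :=
        lt_of_le_of_ne hcond hMne
      refine ⟨?_, hlt⟩
      have hex : ∃ i ∈ R, f i = -M := by
        have hne2 : (R.filter fun i => f i = -M).Nonempty := by
          rw [hfnM]; exact card_pos.1 (by omega)
        obtain ⟨i, hi⟩ := hne2
        exact ⟨i, (mem_filter.1 hi).1, (mem_filter.1 hi).2⟩
      obtain ⟨i, hiR, hiM⟩ := hex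
      apply le_antisymm
      · exact hiM ▸ inf'_le f hiR
      · exact le_inf' _ _ fun i hi => by
          have := neg_le_neg (habsR i hi)
          exact this.trans (neg_abs_le _)
  constructor
  · rcases hval with ⟨hv, hc⟩ | ⟨hv, hc⟩
    · rw [hv]; exact hc
    · rw [hv, neg_neg]; exact hc
  · intro v hv
    apply hcancel
    rcases hval with ⟨h', -⟩ | ⟨h', -⟩ <;> rw [h'] at hv
    · rwa [abs_of_pos hMpos] at hv
    · rwa [abs_neg, abs_of_pos hMpos] at hv

theorem naryBox_recombination {ι : Type*} [DecidableEq ι] (m : ℕ) (hm : 0 < m)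
    (I : Finset ι) (hI : I.Nonempty) (P : Fin m → Finset ι)
    (hPne : ∀ j, (P j).Nonempty)
    (hPdisj : ∀ j k : Fin m, j ≠ k → Disjoint (P j) (P k))
    (hPunion : Finset.univ.biUnion P = I)
    (x : ι → ℝ)
    (h : ∀ j k : Fin m, naryBox (P j) x + naryBox (P k) x ≠ 0) :
    naryBox Finset.univ (fun j => naryBox (P j) x) = naryBox I x := by
  classical
  set b : Fin m → ℝ := fun j => naryBox (P j) x with hbdef
  have hbne : ∀ j, b j ≠ 0 := by
    intro j hj
    have hj' : naryBox (P j) x = 0 := hj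
    exact h j j (by rw [hj']; ring)
  have hspec := fun j => naryBox_spec (P j) x (hbne j)
  have hopp : ∀ j k, b j ≠ -(b k) := by
    intro j k e
    have e' : naryBox (P j) x = -(naryBox (P k) x) := e
    exact h j k (by rw [e']; ring)
  obtain ⟨j₀, -, hmax⟩ :=
    Finset.exists_max_image (univ : Finset (Fin m)) (fun j => |b j|)
      ⟨⟨0, hm⟩, mem_univ _⟩
  have hmax : ∀ k, |b k| ≤ |b j₀| := fun k => hmax k (mem_univ k)
  -- LHS
  have hL : naryBox Finset.univ b = b j₀ := by
    apply naryBox_eq_of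
    · have e1 : (univ.filter fun j => b j = -(b j₀)) = ∅ :=
        filter_eq_empty_iff.2 fun k _ => hopp k j₀
      have e2 : 0 < (univ.filter fun j => b j = b j₀).card :=
        card_pos.2 ⟨j₀, mem_filter.2 ⟨mem_univ _, rfl⟩⟩
      rw [e1]
      simpa using e2
    · intro v hv
      have e1 : (univ.filter fun j => b j = v) = ∅ :=
        filter_eq_empty_iff.2 fun k _ e => by
          rw [← e] at hv; exact absurd (hmax k) (not_le.2 hv)
      have e2 : (univ.filter fun j => b j = -v) = ∅ :=
        filter_eq_empty_iff.2 fun k _ e => by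
          have : |b k| = |v| := by rw [e, abs_neg]
          rw [← this] at hv; exact absurd (hmax k) (not_le.2 hv)
      rw [e1, e2]
  -- count decomposition
  have hcnt : ∀ v : ℝ, (I.filter fun i => x i = v).card
      = ∑ j, ((P j).filter fun i => x i = v).card := by
    intro v
    rw [← hPunion, filter_biUnion, card_biUnion]
    intro j _ k _ hjk
    exact disjoint_filter_filter (hPdisj j k hjk)
  -- RHS
  have hR : naryBox I x = b j₀ := by
    apply naryBox_eq_of
    · rw [hcnt, hcnt]
      apply Finset.sum_lt_sum
      · intro j _
        rcases eq_or_lt_of_le (hmax j) with heq | hlt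
        · rcases abs_eq_abs.1 heq with e | e
          · rw [← e]
            exact le_of_lt (hspec j).1
          · exact absurd e (hopp j j₀)
        · exact ((hspec j).2 (b j₀) hlt).symm.le
      · refine ⟨j₀, mem_univ _, ?_⟩
        exact (hspec j₀).1
    · intro v hv
      rw [hcnt, hcnt]
      apply Finset.sum_congr rfl
      intro j _
      exact (hspec j).2 v (lt_of_le_of_lt (hmax j) hv)
  rw [hL, hR]
end

section
/- Copositive recombination: let I_1, ..., I_m be finite index sets and x^{(i)} ∈ ℝⁿ for i ∈ I_j. If for all j, k the vectors ⊞_{i ∈ I_j} x^{(i)} and ⊞_{i ∈ I_k} x^{(i)} are copositive, i.e., (⊞_{i ∈ I_j} x^{(i)}) ⊙ (⊞_{i ∈ I_k} x^{(i)}) ≥ 0 componentwise (⊙ the Hadamard product), then ⊞_{j ∈ [m]} (⊞_{i ∈ I_j} x^{(i)}) = ⊞ over all i ∈ I_j, j ∈ [m] of x^{(i)}, where boxplus of vectors is applied componentwise. -/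
open Finset Filter

section AuxRecomb
variable {ι : Type*}

/-- The number of indices in `s` whose value is `v`. -/
noncomputable def cnt (s : Finset ι) (f : ι → ℝ) (v : ℝ) : ℕ :=
  (s.filter fun i => f i = v).card

/-- Characterizing property of `naryBox`. -/
def BoxSpec (s : Finset ι) (f : ι → ℝ) (v : ℝ) : Prop :=
  (∀ w : ℝ, |v| < |w| → cnt s f w = cnt s f (-w)) ∧
    (v ≠ 0 → cnt s f (-v) < cnt s f v)

lemma boxSpec_unique {s : Finset ι} {f : ι → ℝ} {v v' : ℝ}
    (h1 : BoxSpec s f v) (h2 : BoxSpec s f v') : v = v' := by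
  rcases lt_trichotomy |v| |v'| with h | h | h
  · have hv' : v' ≠ 0 := by
      intro hz; rw [hz, abs_zero] at h; exact absurd h (not_lt.2 (abs_nonneg v))
    have := h2.2 hv'
    have := h1.1 v' h
    omega
  · rcases abs_eq_abs.1 h with h' | h'
    · exact h'
    · subst h'
      by_cases hv' : v' = 0
      · rw [hv', neg_zero]
      exfalso
      have h1' := h1.2 (neg_ne_zero.2 hv')
      have h2' := h2.2 hv'
      rw [neg_neg] at h1'
      omega
  · have hv : v ≠ 0 := by
      intro hz; rw [hz, abs_zero] at h; exact absurd h (not_lt.2 (abs_nonneg v'))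
    have := h1.2 hv
    have := h2.1 v h
    omega

lemma exists_mem_R_of_cnt_ne {s : Finset ι} {f : ι → ℝ} {w : ℝ}
    (h : cnt s f w ≠ cnt s f (-w)) :
    ∃ i ∈ s, (cnt s f (f i) ≠ cnt s f (-f i)) ∧ |f i| = |w| := by
  have hpos : 0 < cnt s f w ∨ 0 < cnt s f (-w) := by omega
  rcases hpos with hp | hp
  · obtain ⟨i, hi⟩ := Finset.card_pos.1 hp
    rw [Finset.mem_filter] at hi
    exact ⟨i, hi.1, by rw [hi.2]; exact h, by rw [hi.2]⟩
  · obtain ⟨i, hi⟩ := Finset.card_pos.1 hp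
    rw [Finset.mem_filter] at hi
    refine ⟨i, hi.1, ?_, by rw [hi.2, abs_neg]⟩
    rw [hi.2, neg_neg]
    exact fun hh => h hh.symm

lemma naryBox_spec_s12 (s : Finset ι) (f : ι → ℝ) : BoxSpec s f (naryBox s f) := by
  classical
  rw [naryBox]
  set R := s.filter fun i =>
    (s.filter fun j => f j = f i).card ≠ (s.filter fun j => f j = -f i).card with hRdef
  have hmemR : ∀ i, i ∈ R ↔ i ∈ s ∧ cnt s f (f i) ≠ cnt s f (-f i) := by
    intro i; rw [hRdef, Finset.mem_filter]; rfl
  by_cases hR : R.Nonempty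
  · rw [dif_pos hR]
    set M := R.sup' hR fun i => |f i| with hM
    have hMmem : ∃ i ∈ R, |f i| = M := by
      obtain ⟨i, hi, hieq⟩ := Finset.exists_mem_eq_sup' hR fun i => |f i|
      exact ⟨i, hi, hieq.symm⟩
    have hfne : ∀ i ∈ R, f i ≠ 0 := by
      intro i hi hz
      have := (hmemR i).1 hi
      rw [hz, neg_zero] at this
      exact this.2 rfl
    have hMpos : 0 < M := by
      obtain ⟨i, hi, hieq⟩ := hMmem
      rw [← hieq]
      exact abs_pos.2 (hfne i hi)
    have hleM : ∀ i ∈ R, |f i| ≤ M := fun i hi => Finset.le_sup' (fun i => |f i|) hi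
    -- card of value-filter on R equals cnt when counts differ
    have hRcnt : ∀ v : ℝ, cnt s f v ≠ cnt s f (-v) →
        (R.filter fun i => f i = v).card = cnt s f v := by
      intro v hv
      unfold cnt
      congr 1
      ext i
      simp only [Finset.mem_filter]
      constructor
      · rintro ⟨hiR, hival⟩
        exact ⟨((hmemR i).1 hiR).1, hival⟩
      · rintro ⟨his, hival⟩
        refine ⟨(hmemR i).2 ⟨his, ?_⟩, hival⟩
        rw [hival]; exact hv
    -- symmetry above M
    have hsymM : ∀ w : ℝ, M < |w| → cnt s f w = cnt s f (-w) := by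
      intro w hw
      by_contra hne
      obtain ⟨i, his, hi, habs⟩ := exists_mem_R_of_cnt_ne hne
      have hiR : i ∈ R := (hmemR i).2 ⟨his, hi⟩
      have := hleM i hiR
      rw [habs] at this
      exact absurd hw (not_lt.2 this)
    by_cases hgt : (R.filter fun i => f i = -M).card < (R.filter fun i => f i = M).card
    · rw [if_pos hgt]
      -- positive case: sup' = M
      have hc : 0 < (R.filter fun i => f i = M).card := by omega
      obtain ⟨i0, hi0⟩ := Finset.card_pos.1 hc
      rw [Finset.mem_filter] at hi0
      have hcntM : cnt s f M ≠ cnt s f (-M) := by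
        have := ((hmemR i0).1 hi0.1).2
        rwa [hi0.2] at this
      have hsup : R.sup' hR f = M := by
        apply le_antisymm
        · exact Finset.sup'_le hR f fun i hi => (le_abs_self _).trans (hleM i hi)
        · rw [← hi0.2]; exact Finset.le_sup' f hi0.1
      rw [hsup]
      constructor
      · intro w hw
        rw [abs_of_pos hMpos] at hw
        exact hsymM w hw
      · intro _
        have e1 := hRcnt M hcntM
        have e2 := hRcnt (-M) (by rw [neg_neg]; exact fun hh => hcntM hh.symm)
        omega
    · rw [if_neg hgt]
      push_neg at hgt
      -- negative case: inf' = -M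
      have hc : 0 < (R.filter fun i => f i = -M).card := by
        obtain ⟨i, hi, habs⟩ := hMmem
        rcases abs_eq (le_of_lt hMpos) |>.1 habs with h | h
        · have : i ∈ R.filter fun i => f i = M := Finset.mem_filter.2 ⟨hi, h⟩
          have : 0 < (R.filter fun i => f i = M).card :=
            Finset.card_pos.2 ⟨i, this⟩
          omega
        · exact Finset.card_pos.2 ⟨i, Finset.mem_filter.2 ⟨hi, h⟩⟩
      obtain ⟨i0, hi0⟩ := Finset.card_pos.1 hc
      rw [Finset.mem_filter] at hi0
      have hcntM : cnt s f (-M) ≠ cnt s f M := by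
        have := ((hmemR i0).1 hi0.1).2
        rw [hi0.2, neg_neg] at this
        exact this
      have hinf : R.inf' hR f = -M := by
        apply le_antisymm
        · rw [← hi0.2]; exact Finset.inf'_le f hi0.1
        · exact Finset.le_inf' hR f fun i hi =>
            le_trans (neg_le_neg (hleM i hi)) (neg_abs_le _)
      rw [hinf]
      constructor
      · intro w hw
        rw [abs_neg, abs_of_pos hMpos] at hw
        exact hsymM w hw
      · intro _
        rw [neg_neg]
        have e1 := hRcnt (-M) (by rw [neg_neg]; exact hcntM)
        have e2 := hRcnt M (fun hh => hcntM hh.symm)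
        omega
  · rw [dif_neg hR]
    constructor
    · intro w hw
      by_contra hne
      obtain ⟨i, his, hi, _⟩ := exists_mem_R_of_cnt_ne hne
      exact hR ⟨i, (hmemR i).2 ⟨his, hi⟩⟩
    · intro h; exact absurd rfl h

lemma cnt_pos_iff {s : Finset ι} {f : ι → ℝ} {v : ℝ} :
    0 < cnt s f v ↔ ∃ i ∈ s, f i = v := by
  unfold cnt
  rw [Finset.card_pos, Finset.filter_nonempty_iff]

end AuxRecomb

theorem vecBox_copositive_recombination {ι : Type*} [DecidableEq ι] (n m : ℕ)
    (P : Fin m → Finset ι)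
    (hPdisj : ∀ j k : Fin m, j ≠ k → Disjoint (P j) (P k))
    (x : ι → Fin n → ℝ)
    (hcopos : ∀ j k : Fin m, ∀ h : Fin n,
      0 ≤ vecBox (P j) x h * vecBox (P k) x h) :
    vecBox Finset.univ (fun j => vecBox (P j) x) =
      vecBox (Finset.univ.biUnion P) x := by
  classical
  funext h
  show naryBox Finset.univ (fun j => vecBox (P j) x h)
      = naryBox (Finset.univ.biUnion P) (fun i => x i h)
  set f : ι → ℝ := fun i => x i h with hf
  set g : Fin m → ℝ := fun j => vecBox (P j) x h with hg
  have hgj : ∀ j, g j = naryBox (P j) f := fun j => rfl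
  set V : ℝ := naryBox Finset.univ g with hV
  have specV := naryBox_spec_s12 Finset.univ g
  have specB : ∀ j, BoxSpec (P j) f (g j) := by
    intro j; rw [hgj]; exact naryBox_spec_s12 (P j) f
  rw [← hV] at specV
  -- no two blocks have opposite nonzero values
  have hne : ∀ j k : Fin m, g j ≠ 0 → g k = -g j → False := by
    intro j k hj hk
    have h0 : (0:ℝ) ≤ g j * g k := hcopos j k h
    rw [hk] at h0
    nlinarith [mul_self_pos.2 hj]
  -- every block value is bounded by |V|
  have habs : ∀ j, |g j| ≤ |V| := by
    intro j
    by_contra hlt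
    push_neg at hlt
    have hj0 : g j ≠ 0 := by
      intro hz; rw [hz, abs_zero] at hlt; exact absurd hlt (not_lt.2 (abs_nonneg V))
    have hsym := specV.1 (g j) hlt
    have h1 : 0 < cnt Finset.univ g (g j) :=
      cnt_pos_iff.2 ⟨j, Finset.mem_univ j, rfl⟩
    have h2 : 0 < cnt Finset.univ g (-g j) := by omega
    obtain ⟨k, _, hk⟩ := cnt_pos_iff.1 h2
    exact hne j k hj0 hk
  -- count over the union is the sum of block counts
  have hcntsum : ∀ v : ℝ, cnt (Finset.univ.biUnion P) f v = ∑ j, cnt (P j) f v := by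
    intro v
    unfold cnt
    rw [Finset.filter_biUnion]
    exact Finset.card_biUnion fun j _ k _ hjk =>
      Finset.disjoint_filter_filter (hPdisj j k hjk)
  -- V satisfies the spec for the union
  have hspec : BoxSpec (Finset.univ.biUnion P) f V := by
    constructor
    · intro w hw
      rw [hcntsum, hcntsum]
      exact Finset.sum_congr rfl fun j _ =>
        (specB j).1 w (lt_of_le_of_lt (habs j) hw)
    · intro hV0
      have hVg := specV.2 hV0
      have h1 : 0 < cnt Finset.univ g V := by omega
      obtain ⟨j0, _, hj0⟩ := cnt_pos_iff.1 h1
      have hnegV : ∀ j, g j ≠ -V := by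
        intro j hj
        exact hne j0 j (by rw [hj0]; exact hV0) (by rw [hj, hj0])
      rw [hcntsum, hcntsum]
      apply Finset.sum_lt_sum
      · intro j _
        by_cases hj : g j = V
        · have hs := (specB j).2 (by rw [hj]; exact hV0)
          rw [hj] at hs
          exact le_of_lt hs
        · have hlt : |g j| < |V| := by
            rcases lt_or_eq_of_le (habs j) with h' | h'
            · exact h'
            · exfalso
              rcases abs_eq_abs.1 h' with h'' | h''
              · exact hj h''
              · exact hnegV j h''
          have := (specB j).1 V hlt
          omega
      · refine ⟨j0, Finset.mem_univ j0, ?_⟩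
        have := (specB j0).2 (by rw [hj0]; exact hV0)
        rw [hj0] at this
        exact this
  exact (boxSpec_unique (naryBox_spec_s12 _ f) hspec).symm
end

section
/- For vectors x, y ∈ ℝⁿ with x_i y_i < 0 for some coordinate i, setting t_i* = |x_i / y_i|, the point γ(x, y, t_i*) = (max{1, t_i*})^{-1} · (x ⊞ t_i*·y) (boxplus taken componentwise) satisfies γ_i(x, y, t_i*) = 0, and it equals ((|y_i| / max{|x_i|,|y_i|})·x) ⊞ ((|x_i| / max{|x_i|,|y_i|})·y). Moreover t_i* is the unique positive zero of t ↦ (γ(x,y,t))_i. -/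
open Finset Filter

/-- The curve `γ(x, y, t) = (max{1, t})⁻¹ · (x ⊞ t·y)` (componentwise boxplus). -/
noncomputable def gammaMap {n : ℕ} (x y : Fin n → ℝ) (t : ℝ) : Fin n → ℝ :=
  fun k => (max 1 t)⁻¹ * boxplus (x k) (t * y k)

lemma boxplus_smul (c a b : ℝ) (hc : 0 < c) :
    boxplus (c * a) (c * b) = c * boxplus a b := by
  unfold boxplus
  rw [abs_mul, abs_mul, abs_of_pos hc]
  simp only [mul_lt_mul_iff_right₀ hc, mul_right_inj' hc.ne']
  split_ifs <;> ring

lemma boxplus_neg_self (a : ℝ) : boxplus a (-a) = 0 := by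
  simp [boxplus]

theorem intermediate_point_properties {n : ℕ} (x y : Fin n → ℝ) (i : Fin n)
    (hi : x i * y i < 0) (t : ℝ) (ht : t = |x i / y i|) :
    gammaMap x y t i = 0 ∧
    (∀ k : Fin n,
      gammaMap x y t k =
        boxplus ((|y i| / max |x i| |y i|) * x k)
          ((|x i| / max |x i| |y i|) * y k)) ∧
    (∀ s : ℝ, 0 < s → gammaMap x y s i = 0 → s = t) := by
  have hx : x i ≠ 0 := fun h => by simp [h] at hi
  have hy : y i ≠ 0 := fun h => by simp [h] at hi
  have hxa : 0 < |x i| := abs_pos.mpr hx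
  have hya : 0 < |y i| := abs_pos.mpr hy
  have ht' : t = |x i| / |y i| := by rw [ht, abs_div]
  have htpos : 0 < t := by rw [ht']; positivity
  have hty : t * y i = -x i := by
    rcases lt_or_gt_of_ne hy with hy' | hy'
    · have hx' : 0 < x i := by nlinarith
      rw [ht', abs_of_neg hy', abs_of_pos hx', div_neg, neg_mul,
        div_mul_cancel₀ _ hy]
    · have hx' : x i < 0 := by nlinarith
      rw [ht', abs_of_pos hy', abs_of_neg hx', div_mul_cancel₀ _ hy]
  set M := max |x i| |y i| with hM
  have hMpos : 0 < M := lt_max_of_lt_left hxa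
  have hmax : (max 1 t)⁻¹ = |y i| / M := by
    rcases le_total (|x i|) (|y i|) with h | h
    · rw [hM, max_eq_right h, max_eq_left, inv_one, div_self hya.ne']
      rw [ht']
      exact div_le_one_of_le₀ h hya.le
    · rw [hM, max_eq_left h, max_eq_right, ht', inv_div]
      rw [ht']
      exact (one_le_div hya).mpr h
  refine ⟨?_, ?_, ?_⟩
  · simp only [gammaMap, hty, boxplus_neg_self, mul_zero]
  · intro k
    have hc : 0 < |y i| / M := by positivity
    have hct : (|y i| / M) * t = |x i| / M := by
      rw [ht']
      field_simp
    simp only [gammaMap, hmax]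
    rw [← boxplus_smul _ _ _ hc, ← mul_assoc, hct]
  · intro s hs hz
    have hmx : (0:ℝ) < max 1 s := lt_max_of_lt_left one_pos
    have hb : boxplus (x i) (s * y i) = 0 := by
      simp only [gammaMap] at hz
      rcases mul_eq_zero.mp hz with h | h
      · exact absurd h (inv_ne_zero hmx.ne')
      · exact h
    unfold boxplus at hb
    split_ifs at hb with h1 h2
    · exact absurd hb hx
    · have habs : |x i| = s * |y i| := by rwa [abs_mul, abs_of_pos hs] at h2
      rw [ht', habs]
      field_simp
    · exact absurd hb (mul_ne_zero hs.ne' hy)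
end

section
/- For a square matrix A ∈ M_n(ℝ), define |A|_p = (∑_{σ ∈ S_n} sgn(σ) ∏_i a_{i,σ(i)}^{2p+1})^{1/(2p+1)} using the real odd (2p+1)-th root. Then lim_{p → ∞} |A|_p = ⊞_{σ ∈ S_n} (sgn(σ) ∏_{i ∈ [n]} a_{i,σ(i)}), the boxplus over all n! signed permutation products. -/
open Finset Filter

lemma oddRoot_zero (p : ℕ) : oddRoot p 0 = 0 := by
  rw [oddRoot, if_pos le_rfl, Real.zero_rpow (by positivity)]

lemma oddRoot_neg (p : ℕ) (x : ℝ) : oddRoot p (-x) = - oddRoot p x := by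
  rcases lt_trichotomy x 0 with h | h | h
  · rw [oddRoot, oddRoot, if_pos (by linarith), if_neg (not_le.2 h), neg_neg]
  · rw [h, neg_zero, oddRoot_zero, neg_zero]
  · rw [oddRoot, oddRoot, if_neg (by linarith), if_pos h.le, neg_neg]

lemma tendsto_exp_zero : Tendsto (fun p : ℕ => (1:ℝ) / (2 * p + 1)) atTop (nhds 0) := by
  have h : Tendsto (fun p : ℕ => (2 * (p:ℝ) + 1)) atTop atTop := by
    apply Filter.tendsto_atTop_add_const_right
    exact (tendsto_natCast_atTop_atTop).const_mul_atTop two_pos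
  simpa [one_div, Pi.inv_def] using h.inv_tendsto_atTop

lemma tendsto_aux (M d : ℝ) (hM : 0 < M) (hd : 1 ≤ d) (ε : ℕ → ℝ)
    (hε : Tendsto ε atTop (nhds 0)) :
    Tendsto (fun p : ℕ => oddRoot p (M ^ (2 * p + 1) * (d + ε p))) atTop (nhds M) := by
  have h1 : Tendsto (fun p : ℕ => d + ε p) atTop (nhds d) := by
    simpa using tendsto_const_nhds.add hε
  have h2 : Tendsto (fun p : ℕ => (d + ε p) ^ ((1:ℝ)/(2*p+1))) atTop (nhds 1) := by
    have := h1.rpow tendsto_exp_zero (Or.inl (by linarith))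
    simpa using this
  have key : Tendsto (fun p : ℕ => M * (d + ε p) ^ ((1:ℝ)/(2*p+1))) atTop (nhds M) := by
    simpa using tendsto_const_nhds.mul h2
  have hpos : ∀ᶠ p : ℕ in atTop, 0 < d + ε p :=
    h1.eventually (eventually_gt_nhds (by linarith))
  refine key.congr' ?_
  filter_upwards [hpos] with p hp
  have hMK : (0:ℝ) ≤ M ^ (2 * p + 1) := by positivity
  have harg : (0:ℝ) ≤ M ^ (2 * p + 1) * (d + ε p) := mul_nonneg hMK hp.le
  rw [oddRoot, if_pos harg, Real.mul_rpow hMK hp.le]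
  congr 1
  rw [← Real.rpow_natCast M (2 * p + 1), ← Real.rpow_mul hM.le]
  rw [show ((2 * p + 1 : ℕ) : ℝ) * ((1:ℝ)/(2*p+1)) = 1 by
    push_cast; field_simp]
  exact (Real.rpow_one M).symm
lemma sum_compl_zero {ι : Type*} (s : Finset ι) (c : ι → ℝ) (K : ℕ) (hK : Odd K) :
    ∑ i ∈ s.filter (fun i => ¬ ((s.filter fun j => c j = c i).card ≠
        (s.filter fun j => c j = -c i).card)), c i ^ K = 0 := by
  classical
  set T := s.filter (fun i => ¬ ((s.filter fun j => c j = c i).card ≠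
        (s.filter fun j => c j = -c i).card)) with hT
  have hTmem : ∀ i, i ∈ T ↔ i ∈ s ∧
      (s.filter fun j => c j = c i).card = (s.filter fun j => c j = -c i).card := by
    intro i; simp [hT, not_not]
  -- if the counts for v balance, T captures the full fiber of v
  have claimA : ∀ v : ℝ,
      (s.filter fun j => c j = v).card = (s.filter fun j => c j = -v).card →
      T.filter (fun j => c j = v) = s.filter (fun j => c j = v) := by
    intro v hv
    ext j
    simp only [Finset.mem_filter, hTmem]
    constructor
    · rintro ⟨⟨hjs, _⟩, hjv⟩; exact ⟨hjs, hjv⟩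
    · rintro ⟨hjs, hjv⟩
      refine ⟨⟨hjs, ?_⟩, hjv⟩
      rw [hjv]; exact hv
  rw [Finset.sum_comp (fun v : ℝ => v ^ K) c]
  refine Finset.sum_involution (fun v _ => -v) ?_ ?_ ?_ ?_
  · intro v hv
    obtain ⟨i, hiT, hci⟩ := Finset.mem_image.1 hv
    have hPv : (s.filter fun j => c j = v).card = (s.filter fun j => c j = -v).card := by
      rw [← hci]; exact ((hTmem i).1 hiT).2
    have h1 : (T.filter fun j => c j = v).card = (s.filter fun j => c j = v).card := by
      rw [claimA v hPv]
    have h2 : (T.filter fun j => c j = -v).card = (s.filter fun j => c j = -v).card := by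
      rw [claimA (-v) (by rw [neg_neg]; exact hPv.symm)]
    rw [h1, h2, ← hPv, hK.neg_pow]
    simp
  · intro v hv hfv hne
    apply hfv
    have hv0 : v = 0 := by linarith [neg_eq_iff_add_eq_zero.1 hne]
    rw [hv0, zero_pow hK.pos.ne', smul_zero]
  · intro v hv
    obtain ⟨i, hiT, hci⟩ := Finset.mem_image.1 hv
    have hiS := ((hTmem i).1 hiT).1
    have hPv : (s.filter fun j => c j = v).card = (s.filter fun j => c j = -v).card := by
      rw [← hci]; exact ((hTmem i).1 hiT).2
    have hcard : 0 < (s.filter fun j => c j = -v).card := by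
      rw [← hPv]
      exact Finset.card_pos.2 ⟨i, Finset.mem_filter.2 ⟨hiS, hci⟩⟩
    obtain ⟨j, hj⟩ := Finset.card_pos.1 hcard
    have hjs := (Finset.mem_filter.1 hj).1
    have hjv := (Finset.mem_filter.1 hj).2
    refine Finset.mem_image.2 ⟨j, ?_, hjv⟩
    refine (hTmem j).2 ⟨hjs, ?_⟩
    rw [hjv, neg_neg]
    exact hPv.symm
  · intro v hv; exact neg_neg v
lemma tendsto_oddRoot_sum {ι : Type*} (s : Finset ι) (c : ι → ℝ) :
    Tendsto (fun p : ℕ => oddRoot p (∑ i ∈ s, c i ^ (2 * p + 1))) atTop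
      (nhds (naryBox s c)) := by
  classical
  set R := s.filter (fun i =>
    (s.filter fun j => c j = c i).card ≠ (s.filter fun j => c j = -c i).card) with hRdef
  have hsum : ∀ p : ℕ, ∑ i ∈ s, c i ^ (2 * p + 1) = ∑ i ∈ R, c i ^ (2 * p + 1) := by
    intro p
    rw [← Finset.sum_filter_add_sum_filter_not s (fun i =>
      (s.filter fun j => c j = c i).card ≠ (s.filter fun j => c j = -c i).card)
      (fun i => c i ^ (2 * p + 1)),
      sum_compl_zero s c (2 * p + 1) ⟨p, by ring⟩, add_zero]
  by_cases hR : R.Nonempty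
  · -- nonempty case
    set M := R.sup' hR (fun i => |c i|) with hMdef
    obtain ⟨i₀, hi₀R, hi₀⟩ := Finset.exists_mem_eq_sup' hR (fun i => |c i|)
    have hMabs : ∀ i ∈ R, |c i| ≤ M := fun i hi => hMdef ▸ Finset.le_sup' (fun i => |c i|) hi
    have hi₀s : i₀ ∈ s := (Finset.mem_filter.1 hi₀R).1
    have hi₀ne : (s.filter fun j => c j = c i₀).card ≠
        (s.filter fun j => c j = -c i₀).card := (Finset.mem_filter.1 hi₀R).2
    have hci₀ : c i₀ ≠ 0 := by
      intro h; apply hi₀ne; rw [h, neg_zero]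
    have hM0 : 0 < M := by rw [hMdef, hi₀]; exact abs_pos.2 hci₀
    -- counts of the maximal value over R agree with those over s
    have hMne : (s.filter fun j => c j = M).card ≠ (s.filter fun j => c j = -M).card := by
      rcases abs_eq hM0.le |>.1 hi₀.symm with h | h
      · rwa [← h]
      · intro hc; apply hi₀ne
        rw [h, neg_neg]; exact hc.symm
    have hclass : ∀ v : ℝ, ((s.filter fun j => c j = v).card ≠
          (s.filter fun j => c j = -v).card) →
        R.filter (fun i => c i = v) = s.filter (fun i => c i = v) := by
      intro v hv
      rw [hRdef, Finset.filter_filter]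
      apply Finset.filter_congr
      intro i _
      constructor
      · rintro ⟨_, h⟩; exact h
      · intro h; exact ⟨by rw [h]; exact hv, h⟩
    have hMneg : (s.filter fun j => c j = -M).card ≠
        (s.filter fun j => c j = -(-M)).card := by
      rw [neg_neg]; exact hMne.symm
    set P := (R.filter fun i => c i = M).card with hPdef
    set N := (R.filter fun i => c i = -M).card with hNdef
    have hPN : P ≠ N := by
      rw [hPdef, hNdef, hclass M hMne, hclass (-M) hMneg]
      exact hMne
    -- decomposition of the sum over R
    set R3 := R.filter (fun i => ¬ (c i = M) ∧ ¬ (c i = -M)) with hR3def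
    have hdecomp : ∀ p : ℕ, ∑ i ∈ R, c i ^ (2 * p + 1) =
        P * M ^ (2 * p + 1) + N * (-M) ^ (2 * p + 1) + ∑ i ∈ R3, c i ^ (2 * p + 1) := by
      intro p
      rw [← Finset.sum_filter_add_sum_filter_not R (fun i => c i = M)
        (fun i => c i ^ (2 * p + 1)),
        ← Finset.sum_filter_add_sum_filter_not (R.filter (fun i => ¬ (c i = M)))
          (fun i => c i = -M) (fun i => c i ^ (2 * p + 1))]
      have e1 : ∑ i ∈ R.filter (fun i => c i = M), c i ^ (2 * p + 1)
          = P * M ^ (2 * p + 1) := by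
        rw [Finset.sum_congr rfl (fun i hi => by
          rw [(Finset.mem_filter.1 hi).2]), Finset.sum_const, nsmul_eq_mul]
      have e2 : (R.filter (fun i => ¬ (c i = M))).filter (fun i => c i = -M)
          = R.filter (fun i => c i = -M) := by
        rw [Finset.filter_filter]
        apply Finset.filter_congr
        intro i _
        constructor
        · rintro ⟨_, h⟩; exact h
        · intro h; exact ⟨by rw [h]; intro hc; nlinarith, h⟩
      have e3 : ∑ i ∈ R.filter (fun i => c i = -M), c i ^ (2 * p + 1)
          = N * (-M) ^ (2 * p + 1) := by
        rw [Finset.sum_congr rfl (fun i hi => by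
          rw [(Finset.mem_filter.1 hi).2]), Finset.sum_const, nsmul_eq_mul]
      have e4 : (R.filter (fun i => ¬ (c i = M))).filter (fun i => ¬ (c i = -M)) = R3 := by
        rw [hR3def, Finset.filter_filter]
      rw [e1, e2, e3, e4]
      ring
    -- the remainder term divided by M^(2p+1) tends to zero
    set E : ℕ → ℝ := fun p => ∑ i ∈ R3, c i ^ (2 * p + 1) with hEdef
    have hε : Tendsto (fun p : ℕ => E p / M ^ (2 * p + 1)) atTop (nhds 0) := by
      by_cases h3 : R3.Nonempty
      · set m := R3.sup' h3 (fun i => |c i|) with hmdef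
        have hm0 : 0 ≤ m := by
          obtain ⟨i, hi⟩ := h3
          exact (abs_nonneg (c i)).trans (hmdef ▸ Finset.le_sup' (fun i => |c i|) hi)
        have hmM : m < M := by
          rw [hmdef]
          apply Finset.sup'_lt_iff h3 |>.2
          intro i hi
          have hiR : i ∈ R := Finset.mem_filter.1 hi |>.1
          have h1 := hMabs i hiR
          rcases lt_or_eq_of_le h1 with h | h
          · exact h
          · exfalso
            rcases abs_eq hM0.le |>.1 h with h' | h'
            · exact (Finset.mem_filter.1 hi).2.1 h'
            · exact (Finset.mem_filter.1 hi).2.2 h'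
        apply squeeze_zero_norm (a := fun p : ℕ => R3.card * (m / M) ^ (2 * p + 1))
        · intro p
          have hE : |E p| ≤ R3.card * m ^ (2 * p + 1) := by
            calc |E p| ≤ ∑ i ∈ R3, |c i ^ (2 * p + 1)| := Finset.abs_sum_le_sum_abs _ _
            _ = ∑ i ∈ R3, |c i| ^ (2 * p + 1) := by
                apply Finset.sum_congr rfl; intro i _; rw [abs_pow]
            _ ≤ ∑ i ∈ R3, m ^ (2 * p + 1) := by
                apply Finset.sum_le_sum
                intro i hi
                exact pow_le_pow_left₀ (abs_nonneg _) (hmdef ▸ Finset.le_sup' (fun i => |c i|) hi) _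
            _ = R3.card * m ^ (2 * p + 1) := by rw [Finset.sum_const, nsmul_eq_mul]
          rw [Real.norm_eq_abs, abs_div, abs_of_pos (by positivity : (0:ℝ) < M ^ (2*p+1)),
            div_pow, ← mul_div_assoc]
          exact div_le_div_of_nonneg_right hE (by positivity) |>.trans (le_of_eq (by ring))
        · have hbase : Tendsto (fun k : ℕ => (m / M) ^ k) atTop (nhds 0) :=
            tendsto_pow_atTop_nhds_zero_of_lt_one (by positivity)
              ((div_lt_one hM0).2 hmM)
          have hcomp : Tendsto (fun p : ℕ => (m / M) ^ (2 * p + 1)) atTop (nhds 0) :=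
            hbase.comp (tendsto_atTop_mono (fun p => by simp only [id_eq]; omega) tendsto_id)
          simpa using tendsto_const_nhds.mul hcomp
      · have : ∀ p : ℕ, E p = 0 := by
          intro p
          rw [hEdef]
          simp [Finset.not_nonempty_iff_eq_empty.1 h3]
        simpa [this] using tendsto_const_nhds (α := ℝ) (f := atTop (α := ℕ))
    -- evaluate naryBox
    have hbox : naryBox s c = if P > N then M else -M := by
      rw [naryBox]
      simp only []
      rw [dif_pos hR]
      by_cases hgt : P > N
      · rw [if_pos hgt, if_pos hgt]
        apply le_antisymm
        · apply Finset.sup'_le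
          intro i hi
          exact (le_abs_self _).trans (hMabs i hi)
        · obtain ⟨i, hi⟩ := Finset.card_pos.1 (lt_of_le_of_lt (Nat.zero_le N) hgt)
          have hiR := (Finset.mem_filter.1 hi).1
          have hciM := (Finset.mem_filter.1 hi).2
          calc M = c i := hciM.symm
          _ ≤ R.sup' hR c := Finset.le_sup' c hiR
      · rw [if_neg hgt, if_neg hgt]
        have hlt : P < N := lt_of_le_of_ne (not_lt.1 hgt) hPN
        apply le_antisymm
        · obtain ⟨i, hi⟩ := Finset.card_pos.1 (lt_of_le_of_lt (Nat.zero_le P) hlt)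
          have hiR := (Finset.mem_filter.1 hi).1
          have hciM := (Finset.mem_filter.1 hi).2
          calc R.inf' hR c ≤ c i := Finset.inf'_le c hiR
          _ = -M := hciM
        · apply Finset.le_inf'
          intro i hi
          have := hMabs i hi
          have := neg_abs_le (c i)
          linarith
    have hodd : ∀ p : ℕ, (-M : ℝ) ^ (2 * p + 1) = -(M ^ (2 * p + 1)) :=
      fun p => Odd.neg_pow ⟨p, by ring⟩ M
    by_cases hgt : P > N
    · rw [hbox, if_pos hgt]
      have hd : (1:ℝ) ≤ (P:ℝ) - N := by
        have h : ((N + 1 : ℕ) : ℝ) ≤ P := Nat.cast_le.2 hgt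
        push_cast at h; linarith
      have haux := tendsto_aux M ((P:ℝ) - N) hM0 hd (fun p => E p / M ^ (2*p+1)) hε
      refine haux.congr ?_
      intro p
      congr 1
      rw [hsum p, hdecomp p, hodd p]
      have hMK : (M : ℝ) ^ (2*p+1) ≠ 0 := by positivity
      field_simp
      ring
    · rw [hbox, if_neg hgt]
      have hlt : P < N := lt_of_le_of_ne (not_lt.1 hgt) hPN
      have hd : (1:ℝ) ≤ (N:ℝ) - P := by
        have h : ((P + 1 : ℕ) : ℝ) ≤ N := Nat.cast_le.2 hlt
        push_cast at h; linarith
      have hε' : Tendsto (fun p : ℕ => -(E p) / M ^ (2*p+1)) atTop (nhds 0) := by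
        simpa [neg_div] using hε.neg
      have haux := (tendsto_aux M ((N:ℝ) - P) hM0 hd _ hε').neg
      refine haux.congr ?_
      intro p
      rw [← oddRoot_neg]
      congr 1
      rw [hsum p, hdecomp p, hodd p]
      have hMK : (M : ℝ) ^ (2*p+1) ≠ 0 := by positivity
      field_simp
      ring
  · -- empty case
    have hR' : R = ∅ := Finset.not_nonempty_iff_eq_empty.1 hR
    have : ∀ p : ℕ, ∑ i ∈ s, c i ^ (2 * p + 1) = 0 := by
      intro p; rw [hsum p, hR']; simp
    have hbox : naryBox s c = 0 := by
      rw [naryBox]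
      simp only []
      rw [dif_neg hR]
    rw [hbox]
    simpa [this, oddRoot_zero] using tendsto_const_nhds (α := ℝ) (f := atTop (α := ℕ))


theorem limit_determinant (n : ℕ) (A : Matrix (Fin n) (Fin n) ℝ) :
    Filter.Tendsto
      (fun p : ℕ =>
        oddRoot p
          (∑ σ : Equiv.Perm (Fin n),
            ((Equiv.Perm.sign σ : ℤ) : ℝ) * ∏ i : Fin n, A i (σ i) ^ (2 * p + 1)))
      Filter.atTop
      (nhds (naryBox Finset.univ
        (fun σ : Equiv.Perm (Fin n) =>
          ((Equiv.Perm.sign σ : ℤ) : ℝ) * ∏ i : Fin n, A i (σ i)))) := by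
  have key := tendsto_oddRoot_sum (Finset.univ : Finset (Equiv.Perm (Fin n)))
    (fun σ => ((Equiv.Perm.sign σ : ℤ) : ℝ) * ∏ i : Fin n, A i (σ i))
  refine key.congr ?_
  intro p
  congr 1
  apply Finset.sum_congr rfl
  intro σ _
  have hsgn : (((Equiv.Perm.sign σ : ℤ) : ℝ)) ^ (2 * p + 1)
      = ((Equiv.Perm.sign σ : ℤ) : ℝ) := by
    have hodd : Odd (2 * p + 1) := ⟨p, by ring⟩
    rcases Int.units_eq_one_or (Equiv.Perm.sign σ) with h | h <;> rw [h] <;> push_cast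
    · rw [one_pow]
    · rw [hodd.neg_one_pow]
  rw [mul_pow, hsgn, ← Finset.prod_pow]
end

section
/- The map x ↦ ⟨a, x⟩_∞⁻ := a_1x_1 ⌣⁻ a_2x_2 ⌣⁻ ⋯ ⌣⁻ a_nx_n is lower semicontinuous on ℝⁿ; in particular, for every c ∈ ℝ the sublevel set {x ∈ ℝⁿ : ⟨a, x⟩_∞⁻ ≤ c} is closed. -/
open Finset Filter

/-- The lower idempotent symmetric form `x ↦ a₁x₁ ⌣⁻ ⋯ ⌣⁻ aₙxₙ`
(`0` is neutral for `⌣⁻`). -/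
noncomputable def lowerForm {n : ℕ} (a : Fin n → ℝ) (z : Fin n → ℝ) : ℝ :=
  (List.ofFn (fun i => a i * z i)).foldr smileMinus 0

set_option linter.unreachableTactic false in
set_option linter.unusedTactic false in
lemma smile_step (a M m : ℝ) (hM : 0 ≤ M) (hm : m ≤ 0) :
    smileMinus a (if 0 < M + m then M else m) =
    if 0 < max a M + min a m then max a M else min a m := by
  unfold smileMinus
  by_cases hMm : 0 < M + m <;>
    simp only [hMm, if_true, if_false, abs_of_nonneg hM, abs_of_nonpos hm]
  all_goals
    rcases abs_cases a with ⟨h1, h2⟩ | ⟨h1, h2⟩ <;> rw [h1] <;>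
    rcases max_cases a M with ⟨h3, h4⟩ | ⟨h3, h4⟩ <;>
    rcases min_cases a m with ⟨h5, h6⟩ | ⟨h5, h6⟩ <;>
    rw [h3, h5] <;>
    rcases min_cases a M with ⟨h7, h8⟩ | ⟨h7, h8⟩ <;>
    rcases min_cases a m with ⟨h9, h10⟩ | ⟨h9, h10⟩ <;>
    split_ifs <;>
    first
      | rfl
      | linarith
      | (rename_i hA hB hC; rcases lt_or_gt_of_ne hB with hx | hx <;> linarith)
      | (rename_i hA hB hC hD; rcases lt_or_gt_of_ne hB with hx | hx <;> linarith)
      | (rename_i hA hB hC hD; rcases lt_or_gt_of_ne hC with hx | hx <;> linarith)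

lemma foldr_max_nonneg (l : List ℝ) : 0 ≤ l.foldr max 0 := by
  induction l with
  | nil => simp
  | cons a t ih => exact le_trans ih (le_max_right _ _)

lemma foldr_min_nonpos (l : List ℝ) : l.foldr min 0 ≤ 0 := by
  induction l with
  | nil => simp
  | cons a t ih => exact le_trans (min_le_right _ _) ih

lemma foldr_smile_eq (l : List ℝ) :
    l.foldr smileMinus 0 =
    if 0 < l.foldr max 0 + l.foldr min 0 then l.foldr max 0 else l.foldr min 0 := by
  induction l with
  | nil => simp
  | cons a t ih =>
      simp only [List.foldr_cons, ih]
      exact smile_step a _ _ (foldr_max_nonneg t) (foldr_min_nonpos t)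

lemma cont_foldr_max {X : Type*} [TopologicalSpace X] :
    ∀ {n : ℕ} (g : Fin n → X → ℝ), (∀ i, Continuous (g i)) →
      Continuous fun z => (List.ofFn fun i => g i z).foldr max 0
  | 0, g, _ => by
      simp only [List.ofFn_zero, List.foldr_nil]; exact continuous_const
  | n + 1, g, hg => by
      simp only [List.ofFn_succ, List.foldr_cons]
      exact (hg 0).max (cont_foldr_max (fun i => g i.succ) fun i => hg i.succ)

lemma cont_foldr_min {X : Type*} [TopologicalSpace X] :
    ∀ {n : ℕ} (g : Fin n → X → ℝ), (∀ i, Continuous (g i)) →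
      Continuous fun z => (List.ofFn fun i => g i z).foldr min 0
  | 0, g, _ => by
      simp only [List.ofFn_zero, List.foldr_nil]; exact continuous_const
  | n + 1, g, hg => by
      simp only [List.ofFn_succ, List.foldr_cons]
      exact (hg 0).min (cont_foldr_min (fun i => g i.succ) fun i => hg i.succ)

theorem lowerForm_lsc_and_sublevels_closed (n : ℕ) (a : Fin n → ℝ) :
    LowerSemicontinuous (lowerForm a) ∧
    ∀ c : ℝ, IsClosed {z : Fin n → ℝ | lowerForm a z ≤ c} := by
  set M : (Fin n → ℝ) → ℝ := fun z => (List.ofFn fun i => a i * z i).foldr max 0 with hMdef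
  set m : (Fin n → ℝ) → ℝ := fun z => (List.ofFn fun i => a i * z i).foldr min 0 with hmdef
  have hform : ∀ z, lowerForm a z = if 0 < M z + m z then M z else m z := fun z =>
    foldr_smile_eq _
  have hgc : ∀ i : Fin n, Continuous (fun z : Fin n → ℝ => a i * z i) := fun i =>
    continuous_const.mul (continuous_apply i)
  have hMc : Continuous M := cont_foldr_max (fun i (z : Fin n → ℝ) => a i * z i) hgc
  have hmc : Continuous m := cont_foldr_min (fun i (z : Fin n → ℝ) => a i * z i) hgc
  have hge : ∀ z, m z ≤ lowerForm a z := by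
    intro z
    rw [hform z]
    split_ifs
    · exact le_trans (foldr_min_nonpos _) (foldr_max_nonneg _)
    · exact le_rfl
  have hlsc : LowerSemicontinuous (lowerForm a) := by
    intro x y hy
    rw [hform x] at hy
    by_cases h : 0 < M x + m x
    · rw [if_pos h] at hy
      have hopen : IsOpen {z | 0 < M z + m z ∧ y < M z} :=
        (isOpen_lt continuous_const (hMc.add hmc)).inter (isOpen_lt continuous_const hMc)
      filter_upwards [hopen.mem_nhds ⟨h, hy⟩] with z hz
      rw [hform z, if_pos hz.1]
      exact hz.2
    · rw [if_neg h] at hy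
      have hopen : IsOpen {z | y < m z} := isOpen_lt continuous_const hmc
      filter_upwards [hopen.mem_nhds hy] with z hz
      exact lt_of_lt_of_le hz (hge z)
  exact ⟨hlsc, fun c => hlsc.isClosed_preimage c⟩
end
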